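/- arXiv:1609.01358 — 2 statements merged into one kernel-verified Lean document; each statement's English description precedes it below -/
import Mathlib

section
/- (Collatz–Wielandt formula, lower part) For a nonnegative irreducible square matrix A with Perron eigenvalue ρ(A), for every strictly positive vector x, min_i (Ax)_i / x_i ≤ ρ(A), with equality attained when x is the positive Perron eigenvector; hence sup over positive x of min_i (Ax)_i/x_i equals ρ(A). -/
/-!
Comparing `x` with the positive eigenvector `g`: if `t = x i / g i` is maximal at `i`, then
`x ≤ t • g`, so monotonicity of `A` gives `(A x) i ≤ t ρ g i = ρ x i`. Hence every positive `x`
has some ratio `(A x) i / x i` at most `ρ`, while for `x = g` all ratios equal `ρ`.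
-/

open Matrix

/-- A matrix with nonnegative entries is irreducible if some positive power
connects any two indices with a positive entry. -/
def MatrixIrreducible {n : ℕ} (A : Matrix (Fin n) (Fin n) ℝ) : Prop :=
  ∀ i j, ∃ k : ℕ, 0 < (A ^ (k + 1)) i j

namespace Matrix

variable {m ι R : Type*} [Fintype ι]

theorem mulVec_le_mulVec_of_nonneg [Semiring R] [PartialOrder R] [IsOrderedRing R]
    {A : Matrix m ι R} (hA : ∀ i j, 0 ≤ A i j) {x y : ι → R} (hxy : x ≤ y) :
    A *ᵥ x ≤ A *ᵥ y :=
  fun i => dotProduct_le_dotProduct_of_nonneg_left hxy (hA i)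

variable [Field R] [LinearOrder R] [IsStrictOrderedRing R]

theorem exists_mulVec_apply_le_mul_of_mulVec_eq_smul [Nonempty ι] {A : Matrix ι ι R}
    (hA : ∀ i j, 0 ≤ A i j) {ρ : R} {g : ι → R} (hg : ∀ i, 0 < g i) (heig : A *ᵥ g = ρ • g)
    (x : ι → R) : ∃ i, (A *ᵥ x) i ≤ ρ * x i := by
  obtain ⟨i, hi⟩ := Finite.exists_max fun j => x j / g j
  set t := x i / g i
  have hx_le : x ≤ t • g := fun j => by
    simpa only [Pi.smul_apply, smul_eq_mul] using (div_le_iff₀ (hg j)).1 (hi j)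
  refine ⟨i, ?_⟩
  calc (A *ᵥ x) i ≤ (A *ᵥ (t • g)) i := mulVec_le_mulVec_of_nonneg hA hx_le i
    _ = ρ * (t * g i) := by rw [mulVec_smul, heig]; simp only [Pi.smul_apply, smul_eq_mul]; ring
    _ = ρ * x i := by rw [div_mul_cancel₀ _ (hg i).ne']

theorem iInf_mulVec_div_of_mulVec_eq_smul [Nonempty ι] {A : Matrix ι ι ℝ} {ρ : ℝ} {g : ι → ℝ}
    (hg : ∀ i, g i ≠ 0) (heig : A *ᵥ g = ρ • g) : ⨅ i, (A *ᵥ g) i / g i = ρ := by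
  simp only [heig, Pi.smul_apply, smul_eq_mul, mul_div_cancel_right₀ _ (hg _), ciInf_const]

end Matrix

theorem collatz_wielandt_lower_general {n : ℕ} (hn : 0 < n)
    (A : Matrix (Fin n) (Fin n) ℝ) (ρ : ℝ) (g : Fin n → ℝ)
    (hA : ∀ i j, 0 ≤ A i j)
    (hg : ∀ i, 0 < g i) (heig : A.mulVec g = ρ • g) :
    IsGreatest
      {r : ℝ | ∃ x : Fin n → ℝ, (∀ i, 0 < x i) ∧ r = ⨅ i, A.mulVec x i / x i}
      ρ := by
  have : Nonempty (Fin n) := ⟨⟨0, hn⟩⟩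
  refine ⟨⟨g, hg, (iInf_mulVec_div_of_mulVec_eq_smul (fun i => (hg i).ne') heig).symm⟩, ?_⟩
  rintro r ⟨x, hx, rfl⟩
  obtain ⟨i, hi⟩ := exists_mulVec_apply_le_mul_of_mulVec_eq_smul hA hg heig x
  exact (ciInf_le (Set.finite_range _).bddBelow i).trans ((div_le_iff₀ (hx i)).2 hi)

/-- Collatz–Wielandt formula, lower part: the Perron eigenvalue `ρ` is the
greatest value of `min_i (Ax)_i / x_i` over strictly positive vectors `x`. -/
theorem collatz_wielandt_lower {n : ℕ} (hn : 0 < n)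
    (A : Matrix (Fin n) (Fin n) ℝ) (ρ : ℝ) (g : Fin n → ℝ)
    (hA : ∀ i j, 0 ≤ A i j) (hirr : MatrixIrreducible A)
    (hg : ∀ i, 0 < g i) (heig : A.mulVec g = ρ • g) :
    IsGreatest
      {r : ℝ | ∃ x : Fin n → ℝ, (∀ i, 0 < x i) ∧ r = ⨅ i, A.mulVec x i / x i}
      ρ :=
  collatz_wielandt_lower_general hn A ρ g hA hg heig
end

section
/- (Collatz–Wielandt formula, upper part) For a nonnegative irreducible square matrix A with Perron eigenvalue ρ(A), the infimum over strictly positive vectors x of max_i (Ax)_i / x_i equals ρ(A). -/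
/-! If `Ax ≤ r x` with `x > 0` and `Ag = ρ g` with `g > 0`, scale `x` so that `g ≤ s x` with
equality at some index `i`. Nonnegativity of `A` then gives
`ρ gᵢ = (Ag)ᵢ ≤ s (Ax)ᵢ ≤ s r xᵢ = r gᵢ`, so `ρ ≤ r`; and `x = g` attains the value `ρ`. -/

open Matrix

namespace Matrix

variable {ι 𝕜 : Type*} [Fintype ι] [Field 𝕜] [LinearOrder 𝕜] [IsStrictOrderedRing 𝕜]

theorem mulVec_mono_of_nonneg {A : Matrix ι ι 𝕜} (hA : ∀ i j, 0 ≤ A i j) {u v : ι → 𝕜}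
    (huv : u ≤ v) : A *ᵥ u ≤ A *ᵥ v :=
  fun i => dotProduct_le_dotProduct_of_nonneg_left huv (hA i)

theorem eigenvalue_le_of_mulVec_le_smul [Nonempty ι] {A : Matrix ι ι 𝕜} (hA : ∀ i j, 0 ≤ A i j)
    {ρ r : 𝕜} {g x : ι → 𝕜} (hg : ∀ i, 0 < g i) (heig : A *ᵥ g = ρ • g) (hx : ∀ i, 0 < x i)
    (hAx : A *ᵥ x ≤ r • x) : ρ ≤ r := by
  obtain ⟨i, hi⟩ := Finite.exists_max fun j => g j / x j
  set s := g i / x i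
  have hgx : g ≤ s • x := fun j => show g j ≤ s * x j by
    simpa only [div_mul_cancel₀ _ (hx j).ne'] using mul_le_mul_of_nonneg_right (hi j) (hx j).le
  have hs : 0 ≤ s := div_nonneg (hg i).le (hx i).le
  have key : ρ * g i ≤ r * g i :=
    calc ρ * g i = (A *ᵥ g) i := by rw [heig]; rfl
      _ ≤ (A *ᵥ (s • x)) i := mulVec_mono_of_nonneg hA hgx i
      _ = s * (A *ᵥ x) i := by rw [mulVec_smul]; rfl
      _ ≤ s * (r * x i) := mul_le_mul_of_nonneg_left (hAx i) hs
      _ = r * g i := by rw [mul_left_comm, div_mul_cancel₀ _ (hx i).ne']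
  exact le_of_mul_le_mul_right key (hg i)

end Matrix

theorem le_iSup_div_mul {ι : Type*} [Finite ι] (f x : ι → ℝ) (hx : ∀ i, 0 < x i) (i : ι) :
    f i ≤ (⨆ j, f j / x j) * x i :=
  (div_le_iff₀ (hx i)).1 (le_ciSup (f := fun j => f j / x j) (Set.finite_range _).bddAbove i)

theorem collatz_wielandt_upper_general {n : ℕ} (hn : 0 < n)
    (A : Matrix (Fin n) (Fin n) ℝ) (ρ : ℝ) (g : Fin n → ℝ)
    (hA : ∀ i j, 0 ≤ A i j)
    (hg : ∀ i, 0 < g i) (heig : A.mulVec g = ρ • g) :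
    IsLeast
      {r : ℝ | ∃ x : Fin n → ℝ, (∀ i, 0 < x i) ∧ r = ⨆ i, A.mulVec x i / x i}
      ρ := by
  have : Nonempty (Fin n) := ⟨⟨0, hn⟩⟩
  refine ⟨⟨g, hg, ?_⟩, ?_⟩
  · simp only [heig, Pi.smul_apply, smul_eq_mul, mul_div_assoc, div_self (hg _).ne', mul_one,
      ciSup_const]
  · rintro _ ⟨x, hx, rfl⟩
    exact eigenvalue_le_of_mulVec_le_smul hA hg heig hx fun i => le_iSup_div_mul _ x hx i

/-- Collatz–Wielandt formula, upper part: the Perron eigenvalue `ρ` is the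
least value of `max_i (Ax)_i / x_i` over strictly positive vectors `x`. -/
theorem collatz_wielandt_upper {n : ℕ} (hn : 0 < n)
    (A : Matrix (Fin n) (Fin n) ℝ) (ρ : ℝ) (g : Fin n → ℝ)
    (hA : ∀ i j, 0 ≤ A i j) (hirr : MatrixIrreducible A)
    (hg : ∀ i, 0 < g i) (heig : A.mulVec g = ρ • g) :
    IsLeast
      {r : ℝ | ∃ x : Fin n → ℝ, (∀ i, 0 < x i) ∧ r = ⨆ i, A.mulVec x i / x i}
      ρ :=
  collatz_wielandt_upper_general hn A ρ g hA hg heig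
end
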